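/- Let (t_k)_{k≥1} be a strictly increasing sequence of positive reals with counting function n(t) = #{k ≥ 1 : t_k ≤ t}, let M ≥ 1 be an integer, and let z ∈ ℂ∖(−∞, 0]. Then Σ_{k=1}^M (Log(1 + z/t_k) − z/t_k) = M (Log(1 + z/t_M) − z/t_M) − z² ∫_0^{t_M} n(t) / (t²(z + t)) dt, where Log is the principal logarithm and the integral converges absolutely (the integrand vanishes for t < t_1). -/

import Mathlib

open MeasureTheory intervalIntegral Complex

/-- The counting function `n(x) = #{k ≥ 1 : t_k ≤ x}` of a sequence `(t_k)_{k≥1}`. -/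
noncomputable def countFun (t : ℕ → ℝ) (x : ℝ) : ℕ :=
  Nat.card {k : ℕ | 1 ≤ k ∧ t k ≤ x}

lemma aux_ne (z : ℂ) (hz : 0 < z.re ∨ z.im ≠ 0) {x : ℝ} (hx : 0 < x) :
    (x:ℂ) ≠ 0 ∧ z + x ≠ 0 ∧ 1 + z / x ∈ Complex.slitPlane := by
  have hx0 : (x:ℂ) ≠ 0 := by exact_mod_cast hx.ne'
  refine ⟨hx0, ?_, ?_⟩
  · intro h
    rcases hz with h1 | h1
    · have h2 : (z + (x:ℂ)).re = z.re + x := by simp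
      rw [h] at h2; simp at h2; nlinarith
    · have h2 : (z + (x:ℂ)).im = z.im := by simp
      rw [h] at h2; simp at h2; exact h1 h2.symm
  · rw [Complex.mem_slitPlane_iff]
    have him : (1 + z / x).im = z.im / x := by
      simp [Complex.add_im, Complex.div_ofReal_im]
    have hre : (1 + z / x).re = 1 + z.re / x := by
      simp [Complex.add_re, Complex.div_ofReal_re]
    rcases hz with h1 | h1
    · left; rw [hre]; positivity
    · right; rw [him]; exact div_ne_zero h1 hx.ne'

lemma hasDerivAt_F (z : ℂ) (hz : 0 < z.re ∨ z.im ≠ 0) {x : ℝ} (hx : 0 < x) :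
    HasDerivAt (fun y : ℝ => Complex.log (1 + z / (y:ℂ)) - z / (y:ℂ))
      (z^2 / ((x:ℂ)^2 * (z + x))) x := by
  obtain ⟨hx0, hzx, hslit⟩ := aux_ne z hz hx
  have h1 : HasDerivAt (fun w : ℂ => z / w) (-(z / (x:ℂ)^2)) (x:ℂ) := by
    have := (hasDerivAt_inv hx0).const_mul z
    simpa [div_eq_mul_inv, neg_mul, mul_comm] using this
  have h2 : HasDerivAt (fun w : ℂ => 1 + z / w) (-(z / (x:ℂ)^2)) (x:ℂ) := h1.const_add 1
  have h3 := h2.clog hslit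
  have h4 := (h3.sub h1).comp_ofReal
  convert h4 using 1
  · rfl
  have e1 : 1 + z / (x:ℂ) = (z + x) / x := by field_simp; ring
  rw [e1, div_div_eq_mul_div]
  field_simp
  ring

lemma contOn_g (z : ℂ) (hz : 0 < z.re ∨ z.im ≠ 0) {a b : ℝ} (ha : 0 < a) :
    ContinuousOn (fun x : ℝ => 1 / ((x:ℂ)^2 * (z + x))) (Set.Icc a b) := by
  apply ContinuousOn.div continuousOn_const
  · fun_prop
  · intro x hx
    obtain ⟨hx0, hzx, -⟩ := aux_ne z hz (lt_of_lt_of_le ha hx.1)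
    exact mul_ne_zero (pow_ne_zero 2 hx0) hzx

lemma integral_g (z : ℂ) (hz : 0 < z.re ∨ z.im ≠ 0) {a b : ℝ} (ha : 0 < a) (hab : a ≤ b) :
    z^2 * ∫ x in a..b, 1 / ((x:ℂ)^2 * (z + x))
      = (Complex.log (1 + z/b) - z/b) - (Complex.log (1 + z/a) - z/a) := by
  rw [← intervalIntegral.integral_const_mul]
  simp_rw [mul_one_div]
  apply intervalIntegral.integral_eq_sub_of_hasDerivAt
  · intro x hx
    rw [Set.uIcc_of_le hab] at hx
    exact hasDerivAt_F z hz (lt_of_lt_of_le ha hx.1)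
  · apply ContinuousOn.intervalIntegrable
    rw [Set.uIcc_of_le hab]
    apply ContinuousOn.div continuousOn_const
    · fun_prop
    · intro x hx
      obtain ⟨hx0, hzx, -⟩ := aux_ne z hz (lt_of_lt_of_le ha hx.1)
      exact mul_ne_zero (pow_ne_zero 2 hx0) hzx

lemma count_eq (t : ℕ → ℝ) (hpos : ∀ k, 1 ≤ k → 0 < t k)
    (hmono : ∀ j k, 1 ≤ j → j < k → t j < t k)
    (M : ℕ) (hM : 1 ≤ M) {x : ℝ} (hx : x ≤ t M) :
    countFun t x = ((Finset.Icc 1 M).filter (fun k => t k ≤ x)).card := by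
  have hset : {k : ℕ | 1 ≤ k ∧ t k ≤ x}
      = ↑((Finset.Icc 1 M).filter fun k => t k ≤ x) := by
    ext k
    simp only [Set.mem_setOf_eq, Finset.coe_filter, Finset.mem_Icc]
    constructor
    · rintro ⟨h1, h2⟩
      refine ⟨⟨h1, ?_⟩, h2⟩
      by_contra h
      push_neg at h
      exact absurd (le_trans h2 hx) (not_le.2 (hmono M k hM h))
    · rintro ⟨⟨h1, _⟩, h2⟩; exact ⟨h1, h2⟩
  rw [countFun, hset, Nat.card_coe_set_eq, Set.ncard_coe_finset]

lemma split_integral (z : ℂ) (hz : 0 < z.re ∨ z.im ≠ 0) {a b : ℝ} (ha : 0 < a) (hab : a ≤ b) :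
    ∫ x in (0:ℝ)..b, (if a ≤ x then 1 / ((x:ℂ)^2 * (z + x)) else 0)
      = ∫ x in a..b, 1 / ((x:ℂ)^2 * (z + x)) := by
  set h : ℝ → ℂ := fun x => if a ≤ x then 1 / ((x:ℂ)^2 * (z + x)) else 0 with hh
  have heq : Set.EqOn h (fun x : ℝ => 1 / ((x:ℂ)^2 * (z + x))) (Set.Icc a b) := by
    intro x hx
    simp [hh, hx.1]
  have i2 : IntervalIntegrable h volume a b := by
    apply ContinuousOn.intervalIntegrable
    rw [Set.uIcc_of_le hab]
    exact (contOn_g z hz ha).congr heq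
  have i1 : IntervalIntegrable h volume 0 a := by
    rw [intervalIntegrable_iff]
    apply (integrable_zero _ _ _).congr
    have h0 : ∀ᵐ (x : ℝ), x ≠ a := by
      rw [MeasureTheory.ae_iff]
      simp only [ne_eq, not_not]
      have : {x : ℝ | x = a} = {a} := by ext y; simp
      rw [this]; exact measure_singleton a
    filter_upwards [ae_restrict_mem measurableSet_uIoc, ae_restrict_of_ae h0] with x hx hne
    rw [Set.uIoc_of_le ha.le] at hx
    have : ¬ a ≤ x := not_le.2 (lt_of_le_of_ne hx.2 hne)
    simp [hh, this]
  have hsplit := intervalIntegral.integral_add_adjacent_intervals i1 i2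
  have hz1 : ∫ x in (0:ℝ)..a, h x = 0 := by
    rw [intervalIntegral.integral_congr_ae (g := fun _ => (0:ℂ)) ?_, intervalIntegral.integral_zero]
    have h0 : ∀ᵐ (x : ℝ), x ≠ a := by
      rw [MeasureTheory.ae_iff]
      simp only [ne_eq, not_not]
      have : {x : ℝ | x = a} = {a} := by ext y; simp
      rw [this]; exact measure_singleton a
    filter_upwards [h0] with x hne hx
    rw [Set.uIoc_of_le ha.le] at hx
    have : ¬ a ≤ x := not_le.2 (lt_of_le_of_ne hx.2 hne)
    simp [hh, this]
  rw [← hsplit, hz1, zero_add]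
  apply intervalIntegral.integral_congr
  rw [Set.uIcc_of_le hab]
  exact heq

lemma hk_integrable (z : ℂ) (hz : 0 < z.re ∨ z.im ≠ 0) {a b : ℝ} (ha : 0 < a) (hab : a ≤ b) :
    IntervalIntegrable (fun x : ℝ => if a ≤ x then 1 / ((x:ℂ)^2 * (z + x)) else 0)
      volume 0 b := by
  set h : ℝ → ℂ := fun x => if a ≤ x then 1 / ((x:ℂ)^2 * (z + x)) else 0 with hh
  have heq : Set.EqOn h (fun x : ℝ => 1 / ((x:ℂ)^2 * (z + x))) (Set.Icc a b) := by
    intro x hx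
    simp [hh, hx.1]
  have i2 : IntervalIntegrable h volume a b := by
    apply ContinuousOn.intervalIntegrable
    rw [Set.uIcc_of_le hab]
    exact (contOn_g z hz ha).congr heq
  have i1 : IntervalIntegrable h volume 0 a := by
    rw [intervalIntegrable_iff]
    apply (integrable_zero _ _ _).congr
    have h0 : ∀ᵐ (x : ℝ), x ≠ a := by
      rw [MeasureTheory.ae_iff]
      simp only [ne_eq, not_not]
      have : {x : ℝ | x = a} = {a} := by ext y; simp
      rw [this]; exact measure_singleton a
    filter_upwards [ae_restrict_mem measurableSet_uIoc, ae_restrict_of_ae h0] with x hx hne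
    rw [Set.uIoc_of_le ha.le] at hx
    have : ¬ a ≤ x := not_le.2 (lt_of_le_of_ne hx.2 hne)
    simp [hh, this]
  exact i1.trans i2

theorem Hsum_eq_integral_rep_one (t : ℕ → ℝ)
    (hpos : ∀ k, 1 ≤ k → 0 < t k)
    (hmono : ∀ j k, 1 ≤ j → j < k → t j < t k)
    (M : ℕ) (hM : 1 ≤ M) (z : ℂ) (hz : 0 < z.re ∨ z.im ≠ 0) :
    ∑ k ∈ Finset.Icc 1 M, (Complex.log (1 + z / (t k : ℂ)) - z / (t k : ℂ))
      = (M : ℂ) * (Complex.log (1 + z / (t M : ℂ)) - z / (t M : ℂ))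
        - z ^ 2 * ∫ x in (0 : ℝ)..(t M),
            ((countFun t x : ℕ) : ℂ) / ((x : ℂ) ^ 2 * (z + (x : ℂ))) := by
  have htM : 0 < t M := hpos M hM
  have hle : ∀ k ∈ Finset.Icc 1 M, 0 < t k ∧ t k ≤ t M := by
    intro k hk
    simp only [Finset.mem_Icc] at hk
    refine ⟨hpos k hk.1, ?_⟩
    rcases eq_or_lt_of_le hk.2 with h | h
    · rw [h]
    · exact (hmono k M hk.1 h).le
  -- Step 1: each summand via FTC
  have key : ∀ k ∈ Finset.Icc 1 M,
      (Complex.log (1 + z / (t k : ℂ)) - z / (t k : ℂ))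
        = (Complex.log (1 + z / (t M : ℂ)) - z / (t M : ℂ))
          - z^2 * ∫ x in (t k)..(t M), 1 / ((x:ℂ)^2 * (z + x)) := by
    intro k hk
    obtain ⟨h1, h2⟩ := hle k hk
    have := integral_g z hz h1 h2
    rw [this]; ring
  rw [Finset.sum_congr rfl key, Finset.sum_sub_distrib, Finset.sum_const,
    Nat.card_Icc, ← Finset.mul_sum]
  simp only [Nat.add_sub_cancel, nsmul_eq_mul]
  congr 1
  congr 1
  -- Step 2: sum of integrals = integral of counting function
  have step2 : ∑ k ∈ Finset.Icc 1 M, ∫ x in (t k)..(t M), 1 / ((x:ℂ)^2 * (z + x))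
      = ∫ x in (0:ℝ)..(t M), ((countFun t x : ℕ) : ℂ) / ((x : ℂ)^2 * (z + x)) := by
    have e1 : ∀ k ∈ Finset.Icc 1 M,
        ∫ x in (t k)..(t M), 1 / ((x:ℂ)^2 * (z + x))
          = ∫ x in (0:ℝ)..(t M), (if t k ≤ x then 1 / ((x:ℂ)^2 * (z + x)) else 0) := by
      intro k hk
      obtain ⟨h1, h2⟩ := hle k hk
      exact (split_integral z hz h1 h2).symm
    rw [Finset.sum_congr rfl e1,
      ← intervalIntegral.integral_finset_sum
        (fun k hk => hk_integrable z hz (hle k hk).1 (hle k hk).2)]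
    apply intervalIntegral.integral_congr
    intro x hx
    rw [Set.uIcc_of_le htM.le] at hx
    have hcount := count_eq t hpos hmono M hM hx.2
    simp only
    rw [← Finset.sum_filter, Finset.sum_const, hcount, nsmul_eq_mul, mul_one_div]
  rw [step2]
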